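/- Let the min-plus convolution reduction from Pareto sum be applied, producing monotone array C. If C[k] = A[i] + B[j] with i+j = k where (i, A[i]) corresponds to a point dominated in P (i.e., (i, A[i]) ∉ P but some p ∈ P has p.x < i and p.y = A[i]), then there exists k' < k with C[k'] ≤ C[k]; hence (k, C[k]) is pruned by the rule 'keep (k, C[k]) iff k = 0 or C[k] < C[k-1]'. -/

import Mathlib

/-!
If `p ∈ P` has `p.x < i` and `p.y = A[i]`, then `p` already competes for the prefix minimum
`A[i-1]`, so `A[i-1] ≤ A[i]`. The split `(i-1) + j` of `k - 1` then gives
`C[k-1] ≤ A[i-1] + B[j] ≤ A[i] + B[j] = C[k]`, so `C` does not strictly descend at `k`.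
-/

def minPlusCandidates (W : ℤ) (A B : ℤ → ℤ) (k : ℤ) : Set ℤ :=
  {v | ∃ i j : ℤ, 0 ≤ i ∧ i ≤ W ∧ 0 ≤ j ∧ j ≤ W ∧ i + j = k ∧ v = A i + B j}

theorem minPlus_le_add {W : ℤ} {A B C : ℤ → ℤ} {i j : ℤ}
    (hC : IsLeast (minPlusCandidates W A B (i + j)) (C (i + j)))
    (hi0 : 0 ≤ i) (hiW : i ≤ W) (hj0 : 0 ≤ j) (hjW : j ≤ W) :
    C (i + j) ≤ A i + B j :=
  hC.2 ⟨i, j, hi0, hiW, hj0, hjW, rfl, rfl⟩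

theorem prefixMin_pred_le_of_dominated {P : Set (ℤ × ℤ)} {A : ℤ → ℤ} {i : ℤ}
    (hA : ((∃ p ∈ P, p.1 ≤ i - 1) →
        (∃ p ∈ P, p.1 ≤ i - 1 ∧ A (i - 1) = p.2) ∧ (∀ p ∈ P, p.1 ≤ i - 1 → A (i - 1) ≤ p.2)))
    {p : ℤ × ℤ} (hpP : p ∈ P) (hpx : p.1 < i) (hpy : p.2 = A i) :
    A (i - 1) ≤ A i := by
  have hp : p.1 ≤ i - 1 := by omega
  exact hpy ▸ (hA ⟨p, hpP, hp⟩).2 p hpP hp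

theorem not_strictDescent_of_pred_le {C : ℤ → ℤ} {k : ℤ} (hk : 0 < k) (hle : C (k - 1) ≤ C k) :
    (∃ k' : ℤ, 0 ≤ k' ∧ k' < k ∧ C k' ≤ C k) ∧ ¬(k = 0 ∨ C k < C (k - 1)) :=
  ⟨⟨k - 1, by omega, by omega, hle⟩, by omega⟩

theorem dominated_entry_is_pruned_general (W : ℤ)
    (P : Set (ℤ × ℤ))
    (hPW : ∀ p ∈ P, 0 ≤ p.1 ∧ p.1 ≤ W ∧ 0 ≤ p.2 ∧ p.2 ≤ W)
    (A B : ℤ → ℤ)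
    (hA : ∀ i : ℤ, 0 ≤ i → i ≤ W →
      (((∃ p ∈ P, p.1 ≤ i) →
        (∃ p ∈ P, p.1 ≤ i ∧ A i = p.2) ∧ (∀ p ∈ P, p.1 ≤ i → A i ≤ p.2)) ∧
       ((∀ p ∈ P, ¬ p.1 ≤ i) → A i = W + 1)))
    (C : ℤ → ℤ)
    (hC : ∀ k : ℤ, 0 ≤ k → k ≤ 2 * W →
      IsLeast {v : ℤ | ∃ i j : ℤ, 0 ≤ i ∧ i ≤ W ∧ 0 ≤ j ∧ j ≤ W ∧ i + j = k ∧ v = A i + B j}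
        (C k))
    (i j : ℤ) (hiW : i ≤ W) (hj0 : 0 ≤ j) (hjW : j ≤ W)
    (hval : C (i + j) = A i + B j)
    (hdomP : ∃ p ∈ P, p.1 < i ∧ p.2 = A i) :
    (∃ k' : ℤ, 0 ≤ k' ∧ k' < i + j ∧ C k' ≤ C (i + j)) ∧
    ¬(i + j = 0 ∨ C (i + j) < C (i + j - 1)) := by
  obtain ⟨p, hpP, hpx, hpy⟩ := hdomP
  have hi1 : 1 ≤ i := by linarith [(hPW p hpP).1]
  have hApred : A (i - 1) ≤ A i :=
    prefixMin_pred_le_of_dominated (hA (i - 1) (by omega) (by omega)).1 hpP hpx hpy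
  have hsplit : i + j - 1 = (i - 1) + j := by ring
  have hCpred : C (i + j - 1) ≤ A (i - 1) + B j := by
    rw [hsplit]
    exact minPlus_le_add (hC _ (by omega) (by omega)) (by omega) (by omega) hj0 hjW
  exact not_strictDescent_of_pred_le (by omega) (by omega)

/-- In the reduction, if `C[k] = A[i] + B[j]` with `i + j = k` where
`(i, A[i]) ∉ P` but some `p ∈ P` has `p.x < i` and `p.y = A[i]`, then some `k' < k`
has `C[k'] ≤ C[k]`; hence `(k, C[k])` is pruned by the rule keeping `(k, C[k])`
iff `k = 0` or `C[k] < C[k-1]`. -/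
theorem dominated_entry_is_pruned (W : ℤ) (hW : 0 ≤ W)
    (P Q : Set (ℤ × ℤ))
    (hPW : ∀ p ∈ P, 0 ≤ p.1 ∧ p.1 ≤ W ∧ 0 ≤ p.2 ∧ p.2 ≤ W)
    (hQW : ∀ q ∈ Q, 0 ≤ q.1 ∧ q.1 ≤ W ∧ 0 ≤ q.2 ∧ q.2 ≤ W)
    (A B : ℤ → ℤ)
    (hA : ∀ i : ℤ, 0 ≤ i → i ≤ W →
      (((∃ p ∈ P, p.1 ≤ i) →
        (∃ p ∈ P, p.1 ≤ i ∧ A i = p.2) ∧ (∀ p ∈ P, p.1 ≤ i → A i ≤ p.2)) ∧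
       ((∀ p ∈ P, ¬ p.1 ≤ i) → A i = W + 1)))
    (hB : ∀ i : ℤ, 0 ≤ i → i ≤ W →
      (((∃ q ∈ Q, q.1 ≤ i) →
        (∃ q ∈ Q, q.1 ≤ i ∧ B i = q.2) ∧ (∀ q ∈ Q, q.1 ≤ i → B i ≤ q.2)) ∧
       ((∀ q ∈ Q, ¬ q.1 ≤ i) → B i = W + 1)))
    (C : ℤ → ℤ)
    (hC : ∀ k : ℤ, 0 ≤ k → k ≤ 2 * W →
      IsLeast {v : ℤ | ∃ i j : ℤ, 0 ≤ i ∧ i ≤ W ∧ 0 ≤ j ∧ j ≤ W ∧ i + j = k ∧ v = A i + B j}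
        (C k))
    (hCmono : ∀ k k' : ℤ, 0 ≤ k' → k' ≤ k → k ≤ 2 * W → C k ≤ C k')
    (i j : ℤ) (hi0 : 0 ≤ i) (hiW : i ≤ W) (hj0 : 0 ≤ j) (hjW : j ≤ W)
    (hval : C (i + j) = A i + B j)
    (hnotP : (i, A i) ∉ P)
    (hdomP : ∃ p ∈ P, p.1 < i ∧ p.2 = A i) :
    (∃ k' : ℤ, 0 ≤ k' ∧ k' < i + j ∧ C k' ≤ C (i + j)) ∧
    ¬(i + j = 0 ∨ C (i + j) < C (i + j - 1)) :=
  dominated_entry_is_pruned_general W P hPW A B hA C hC i j hiW hj0 hjW hval hdomP
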